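/- Let m ≥ 2 be an integer. For every t ∈ {0,…,m}, the number of permutations σ of {1,…,2m} such that |σ(i) − i| ≤ m for all i ∈ {1,…,2m} and exactly t indices j ∈ {m+1,…,2m} satisfy σ(j) ≤ m is equal to ((m−t)! · S(m+1, m−t+1))². -/

import Mathlib

/-- Stirling numbers of the second kind: `stirling n k` is the number of
partitions of an `n`-element set into `k` nonempty blocks. It satisfies
`stirling 0 0 = 1`, `stirling n 0 = 0` for `n ≥ 1`, and
`stirling (n+1) k = k * stirling n k + stirling n (k-1)`. -/
def stirling : ℕ → ℕ → ℕ
  | 0, 0 => 1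
  | 0, _ + 1 => 0
  | _ + 1, 0 => 0
  | n + 1, k + 1 => (k + 1) * stirling n (k + 1) + stirling n k

/-!
Index the positions by `0, …, 2m-1` and split them into the low half `[0, m)` and the high half
`[m, 2m)`. A down-crossing `j` (high position, low value) is recorded as the rook
`(j - m, σ j + 1)` and an up-crossing `i` as the rook `(σ i - m, i + 1)`. The band condition
`|σ i - i| ≤ m` says exactly that these rooks lie on the staircase `{(r, c) | r < c ≤ m}`, and
injectivity of `σ` makes each family non-attacking; both families have `t` rooks.

Conversely, two such placements fix `σ` on the crossings, and off them `σ` is an arbitrary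
bijection of the `m - t` remaining positions of each half onto the `m - t` remaining values of that
half: every fibre has `((m - t)!)²` elements. Finally, placements of `t` non-attacking rooks on the
staircase of size `n + 1` number `S(n + 1, n + 1 - t)`: splitting by whether the last column is
occupied gives the Stirling recursion.
-/

open Finset

theorem stirling_succ_succ (n k : ℕ) :
    stirling (n + 1) (k + 1) = (k + 1) * stirling n (k + 1) + stirling n k := rfl

theorem stirling_eq_zero_of_lt : ∀ {n k : ℕ}, n < k → stirling n k = 0
  | 0, _ + 1, _ => rfl
  | n + 1, k + 1, h => by
    rw [stirling, stirling_eq_zero_of_lt (by omega : n < k + 1),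
      stirling_eq_zero_of_lt (by omega : n < k), mul_zero]

theorem stirling_self : ∀ n : ℕ, stirling n n = 1
  | 0 => rfl
  | n + 1 => by
    rw [stirling, stirling_eq_zero_of_lt (Nat.lt_succ_self n), stirling_self n, mul_zero]

def staircase (n : ℕ) : Finset (ℕ × ℕ) :=
  (range n ×ˢ range n).filter fun p => p.1 < p.2

@[simp]
theorem mem_staircase {n : ℕ} {p : ℕ × ℕ} : p ∈ staircase n ↔ p.1 < p.2 ∧ p.2 < n := by
  simp only [staircase, mem_filter, mem_product, mem_range]
  omega

structure IsRookPlacement (n : ℕ) (R : Finset (ℕ × ℕ)) : Prop where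
  subset_staircase : R ⊆ staircase n
  injOn_fst : Set.InjOn Prod.fst (R : Set (ℕ × ℕ))
  injOn_snd : Set.InjOn Prod.snd (R : Set (ℕ × ℕ))

namespace IsRookPlacement

variable {n : ℕ} {R R' : Finset (ℕ × ℕ)} {a : ℕ × ℕ}

theorem fst_lt_snd (hR : IsRookPlacement n R) (ha : a ∈ R) : a.1 < a.2 :=
  (mem_staircase.mp (hR.subset_staircase ha)).1

theorem snd_lt (hR : IsRookPlacement n R) (ha : a ∈ R) : a.2 < n :=
  (mem_staircase.mp (hR.subset_staircase ha)).2

theorem last_notMem (hR : IsRookPlacement n R) (r : ℕ) : (r, n) ∉ R :=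
  fun h => lt_irrefl n (hR.snd_lt h)

theorem mono (hR : IsRookPlacement n R) {n' : ℕ} (h : n ≤ n') : IsRookPlacement n' R where
  subset_staircase _ ha := mem_staircase.mpr ⟨hR.fst_lt_snd ha, (hR.snd_lt ha).trans_le h⟩
  injOn_fst := hR.injOn_fst
  injOn_snd := hR.injOn_snd

theorem of_succ (hR : IsRookPlacement (n + 1) R) (h : ∀ a ∈ R, a.2 ≠ n) :
    IsRookPlacement n R where
  subset_staircase a ha :=
    mem_staircase.mpr ⟨hR.fst_lt_snd ha, by have := hR.snd_lt ha; have := h a ha; omega⟩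
  injOn_fst := hR.injOn_fst
  injOn_snd := hR.injOn_snd

theorem card_range_sdiff_image_fst (hR : IsRookPlacement (n + 1) R) :
    #(range n \ R.image Prod.fst) = n - #R := by
  have hsub : R.image Prod.fst ⊆ range n := by
    simp only [subset_iff, mem_image, mem_range]
    rintro _ ⟨a, ha, rfl⟩
    exact (hR.fst_lt_snd ha).trans_le (Nat.lt_succ_iff.mp (hR.snd_lt ha))
  rw [card_sdiff_of_subset hsub, card_range, card_image_of_injOn hR.injOn_fst]

theorem insert_last (hR : IsRookPlacement n R) {r : ℕ} (hr : r < n)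
    (hrR : r ∉ R.image Prod.fst) : IsRookPlacement (n + 1) (insert (r, n) R) := by
  refine ⟨?_, ?_, ?_⟩
  · refine insert_subset (mem_staircase.mpr ⟨hr, n.lt_succ_self⟩) fun a ha => ?_
    exact mem_staircase.mpr ⟨hR.fst_lt_snd ha, (hR.snd_lt ha).trans n.lt_succ_self⟩
  · rw [coe_insert, Set.injOn_insert (hR.last_notMem r), ← coe_image]
    exact ⟨hR.injOn_fst, hrR⟩
  · rw [coe_insert, Set.injOn_insert (hR.last_notMem r)]
    exact ⟨hR.injOn_snd, fun ⟨a, ha, han⟩ => (hR.snd_lt ha).ne han⟩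

theorem insert_last_inj (hR : IsRookPlacement n R) (hR' : IsRookPlacement n R') {r r' : ℕ}
    (h : insert (r, n) R = insert (r', n) R') : r = r' ∧ R = R' := by
  obtain rfl : r = r' := by
    rcases mem_insert.mp (h ▸ mem_insert_self (r, n) R) with h | h
    · exact congrArg Prod.fst h
    · exact absurd h (hR'.last_notMem r)
  refine ⟨rfl, ?_⟩
  simpa only [erase_insert (hR.last_notMem r), erase_insert (hR'.last_notMem r)] using
    congrArg (erase · (r, n)) h

theorem erase_last (hR : IsRookPlacement (n + 1) R) (ha : a ∈ R) (han : a.2 = n) :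
    IsRookPlacement n (R.erase a) ∧ a.1 ∉ (R.erase a).image Prod.fst := by
  have hRa : IsRookPlacement (n + 1) (R.erase a) :=
    ⟨(erase_subset a R).trans hR.subset_staircase, hR.injOn_fst.mono (by simp),
      hR.injOn_snd.mono (by simp)⟩
  refine ⟨hRa.of_succ fun b hb hbn => ?_, fun hmem => ?_⟩
  · exact ne_of_mem_erase hb (hR.injOn_snd (mem_of_mem_erase hb) ha (hbn.trans han.symm))
  · obtain ⟨b, hb, hba⟩ := mem_image.mp hmem
    exact ne_of_mem_erase hb (hR.injOn_fst (mem_of_mem_erase hb) ha hba)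

end IsRookPlacement

open Classical in
noncomputable def rookPlacements (n t : ℕ) : Finset (Finset (ℕ × ℕ)) :=
  ((staircase n).powersetCard t).filter (IsRookPlacement n)

theorem mem_rookPlacements {n t : ℕ} {R : Finset (ℕ × ℕ)} :
    R ∈ rookPlacements n t ↔ IsRookPlacement n R ∧ #R = t := by
  simp only [rookPlacements, mem_filter, mem_powersetCard]
  exact ⟨fun h => ⟨h.2, h.1.2⟩, fun h => ⟨⟨h.1.subset_staircase, h.2⟩, h.1⟩⟩

theorem rookPlacements_zero_right (n : ℕ) : rookPlacements n 0 = {∅} := by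
  ext R
  simp only [mem_rookPlacements, card_eq_zero, mem_singleton]
  constructor
  · exact And.right
  · rintro rfl
    exact ⟨⟨empty_subset _, by simp, by simp⟩, rfl⟩

theorem rookPlacements_one_eq_empty (t : ℕ) : rookPlacements 1 (t + 1) = ∅ := by
  ext R
  simp only [mem_rookPlacements, notMem_empty, iff_false, not_and]
  intro hR hcard
  obtain ⟨a, ha⟩ := (card_pos (s := R)).mp (by omega)
  have := hR.fst_lt_snd ha
  have := hR.snd_lt ha
  omega

theorem filter_rookPlacements_succ_not_exists (n t : ℕ) :
    (rookPlacements (n + 1) t).filter (fun R => ¬∃ a ∈ R, a.2 = n) = rookPlacements n t := by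
  ext R
  simp only [mem_filter, mem_rookPlacements, not_exists, not_and]
  constructor
  · rintro ⟨⟨hR, hcard⟩, hn⟩
    exact ⟨hR.of_succ hn, hcard⟩
  · rintro ⟨hR, hcard⟩
    exact ⟨⟨hR.mono n.le_succ, hcard⟩, fun a ha => (hR.snd_lt ha).ne⟩

theorem card_filter_rookPlacements_succ_exists (n t : ℕ) :
    #((rookPlacements (n + 1) (t + 1)).filter (fun R => ∃ a ∈ R, a.2 = n)) =
      (n - t) * #(rookPlacements n t) := by
  have hsigma : #((rookPlacements n t).sigma fun R => range n \ R.image Prod.fst) =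
      (n - t) * #(rookPlacements n t) := by
    rw [card_sigma, sum_const_nat fun R hR => ?_, mul_comm]
    obtain ⟨hRook, rfl⟩ := mem_rookPlacements.mp hR
    exact (hRook.mono n.le_succ).card_range_sdiff_image_fst
  rw [← hsigma]
  symm
  refine card_bij (fun p _ => insert (p.2, n) p.1) ?_ ?_ ?_
  · rintro ⟨R, r⟩ hp
    simp only [mem_sigma, mem_sdiff, mem_range, mem_rookPlacements] at hp
    obtain ⟨⟨hR, rfl⟩, hr, hrR⟩ := hp
    exact mem_filter.mpr ⟨mem_rookPlacements.mpr ⟨hR.insert_last hr hrR,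
      card_insert_of_notMem (hR.last_notMem r)⟩, _, mem_insert_self _ _, rfl⟩
  · rintro ⟨R, r⟩ hp ⟨R', r'⟩ hp' h
    simp only [mem_sigma, mem_rookPlacements] at hp hp'
    obtain ⟨rfl, rfl⟩ := hp.1.1.insert_last_inj hp'.1.1 h
    rfl
  · intro R hR
    simp only [mem_filter, mem_rookPlacements] at hR
    obtain ⟨⟨hR, hcard⟩, a, ha, han⟩ := hR
    obtain ⟨hRook, hfresh⟩ := hR.erase_last ha han
    refine ⟨⟨R.erase a, a.1⟩, ?_, by simp only [← han, Prod.mk.eta, insert_erase ha]⟩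
    simp only [mem_sigma, mem_sdiff, mem_range, mem_rookPlacements]
    exact ⟨⟨hRook, by rw [card_erase_of_mem ha, hcard, Nat.add_sub_cancel]⟩,
      han ▸ hR.fst_lt_snd ha, hfresh⟩

theorem card_rookPlacements_succ_succ (n t : ℕ) :
    #(rookPlacements (n + 1) (t + 1)) =
      #(rookPlacements n (t + 1)) + (n - t) * #(rookPlacements n t) := by
  rw [← card_filter_add_card_filter_not (fun R => ∃ a ∈ R, a.2 = n),
    card_filter_rookPlacements_succ_exists, filter_rookPlacements_succ_not_exists, add_comm]

theorem card_rookPlacements (n t : ℕ) :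
    #(rookPlacements (n + 1) t) = stirling (n + 1) (n + 1 - t) := by
  induction n generalizing t with
  | zero =>
    cases t with
    | zero => simp [rookPlacements_zero_right, stirling]
    | succ t => simp [rookPlacements_one_eq_empty, stirling]
  | succ n ih =>
    cases t with
    | zero => simp [rookPlacements_zero_right, stirling_self]
    | succ t =>
      rw [card_rookPlacements_succ_succ, ih, ih]
      rcases Nat.lt_or_ge n t with h | h
      · rw [Nat.sub_eq_zero_of_le (by omega : n + 1 ≤ t + 1), Nat.sub_eq_zero_of_le h,
          Nat.sub_eq_zero_of_le (by omega : n + 1 + 1 ≤ t + 1)]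
        rfl
      · rw [show n + 1 - (t + 1) = n - t by omega, show n + 1 + 1 - (t + 1) = n - t + 1 by omega,
          show n + 1 - t = n - t + 1 by omega, stirling_succ_succ (n + 1) (n - t)]
        ring

theorem Equiv.Perm.card_filter_notMem_inv_mem {α : Type*} [Fintype α] [DecidableEq α]
    (σ : Equiv.Perm α) (s : Finset α) : #{x | x ∉ s ∧ σ⁻¹ x ∈ s} = #{x | x ∉ s ∧ σ x ∈ s} := by
  have hinv : #{x | x ∉ s ∧ σ⁻¹ x ∈ s} = #{x ∈ s | σ x ∉ s} :=
    card_equiv σ⁻¹ fun x => by simp [and_comm]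
  have hpre : #s = #{x | σ x ∈ s} := card_equiv σ⁻¹ fun x => by simp
  have hs := card_filter_add_card_filter_not (s := s) fun x => σ x ∈ s
  have hσs := card_filter_add_card_filter_not (s := {x | σ x ∈ s}) fun x => x ∈ s
  rw [filter_filter, filter_filter] at hσs
  have hboth : s.filter (σ · ∈ s) = univ.filter fun x => σ x ∈ s ∧ x ∈ s := by ext; simp [and_comm]
  have hout : univ.filter (fun x => σ x ∈ s ∧ x ∉ s) = univ.filter fun x => x ∉ s ∧ σ x ∈ s := by
    ext; simp [and_comm]
  rw [hboth] at hs
  rw [hout] at hσs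
  omega

open Equiv

section Banded

variable {m : ℕ}

def IsBanded (σ : Perm (Fin (2 * m))) : Prop :=
  ∀ i : Fin (2 * m), |((i : ℕ) : ℤ) - ((σ i : ℕ) : ℤ)| ≤ (m : ℤ)

instance : DecidablePred (IsBanded (m := m)) := fun _ => inferInstanceAs (Decidable (∀ _, _))

def downCrossings (σ : Perm (Fin (2 * m))) : Finset (Fin (2 * m)) :=
  {j | m ≤ (j : ℕ) ∧ (σ j : ℕ) < m}

def downRooks (σ : Perm (Fin (2 * m))) : Finset (ℕ × ℕ) :=
  (downCrossings σ).image fun j : Fin (2 * m) => ((j : ℕ) - m, (σ j : ℕ) + 1)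

def upRooks (σ : Perm (Fin (2 * m))) : Finset (ℕ × ℕ) :=
  downRooks σ⁻¹

variable {σ : Perm (Fin (2 * m))} {a : ℕ × ℕ}

theorem mem_downRooks :
    a ∈ downRooks σ ↔
      ∃ j : Fin (2 * m), m ≤ (j : ℕ) ∧ (σ j : ℕ) < m ∧ ((j : ℕ) - m, (σ j : ℕ) + 1) = a := by
  simp [downRooks, downCrossings, and_assoc]

theorem mem_upRooks :
    a ∈ upRooks σ ↔
      ∃ i : Fin (2 * m), (i : ℕ) < m ∧ m ≤ (σ i : ℕ) ∧ ((σ i : ℕ) - m, (i : ℕ) + 1) = a := by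
  rw [upRooks, mem_downRooks]
  constructor
  · rintro ⟨j, hj, hσj, rfl⟩
    exact ⟨σ⁻¹ j, hσj, by simpa using hj, by simp⟩
  · rintro ⟨i, hi, hσi, rfl⟩
    exact ⟨σ i, hσi, by simpa using hi, by simp⟩

theorem card_downRooks (σ : Perm (Fin (2 * m))) : #(downRooks σ) = #(downCrossings σ) := by
  refine card_image_of_injOn fun j hj j' hj' h => Fin.ext ?_
  simp only [downCrossings, coe_filter, mem_univ, true_and, Set.mem_ofPred_eq] at hj hj'
  have := congrArg Prod.fst h
  simp only at this
  omega

theorem card_downCrossings_inv (σ : Perm (Fin (2 * m))) :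
    #(downCrossings σ⁻¹) = #(downCrossings σ) := by
  simpa only [downCrossings, mem_filter, mem_univ, true_and, not_lt] using
    σ.card_filter_notMem_inv_mem {x | (x : ℕ) < m}

theorem IsBanded.inv (h : IsBanded σ) : IsBanded σ⁻¹ := fun i => by
  simpa [abs_sub_comm] using h (σ⁻¹ i)

theorem IsBanded.isRookPlacement_downRooks (h : IsBanded σ) :
    IsRookPlacement (m + 1) (downRooks σ) where
  subset_staircase a ha := by
    obtain ⟨j, hj, hσj, rfl⟩ := mem_downRooks.mp ha
    have := abs_le.mp (h j)
    exact mem_staircase.mpr ⟨by omega, by omega⟩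
  injOn_fst := by
    rintro _ ha _ ha' h
    obtain ⟨j, hj, hσj, rfl⟩ := mem_downRooks.mp ha
    obtain ⟨j', hj', hσj', rfl⟩ := mem_downRooks.mp ha'
    obtain rfl : j = j' := Fin.ext (by simp only at h; omega)
    rfl
  injOn_snd := by
    rintro _ ha _ ha' h
    obtain ⟨j, hj, hσj, rfl⟩ := mem_downRooks.mp ha
    obtain ⟨j', hj', hσj', rfl⟩ := mem_downRooks.mp ha'
    obtain rfl : j = j' := σ.injective (Fin.ext (by simp only at h; omega))
    rfl

theorem isBanded_iff_isRookPlacement :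
    IsBanded σ ↔ IsRookPlacement (m + 1) (downRooks σ) ∧ IsRookPlacement (m + 1) (upRooks σ) := by
  refine ⟨fun h => ⟨h.isRookPlacement_downRooks, h.inv.isRookPlacement_downRooks⟩,
    fun ⟨h₁, h₂⟩ i => ?_⟩
  rw [abs_le]
  by_cases hi : (i : ℕ) < m <;> by_cases hσi : (σ i : ℕ) < m
  · omega
  · have := h₂.fst_lt_snd (mem_upRooks.mpr ⟨i, hi, by omega, rfl⟩)
    simp only at this
    omega
  · have := h₁.fst_lt_snd (mem_downRooks.mpr ⟨i, by omega, hσi, rfl⟩)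
    simp only at this
    omega
  · omega

theorem IsBanded.mem_rookPlacements_downRooks (h : IsBanded σ) :
    downRooks σ ∈ rookPlacements (m + 1) #(downCrossings σ) :=
  mem_rookPlacements.mpr ⟨h.isRookPlacement_downRooks, card_downRooks σ⟩

theorem IsBanded.mem_rookPlacements_upRooks (h : IsBanded σ) :
    upRooks σ ∈ rookPlacements (m + 1) #(downCrossings σ) :=
  card_downCrossings_inv σ ▸ h.inv.mem_rookPlacements_downRooks

end Banded

section FreeSets

variable {m : ℕ}

/- If `σ` has down-crossing rooks `R₁` and up-crossing rooks `R₂`, then `σ` maps `lowFree m R₂`,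
the low positions it keeps low, onto `lowFree m R₁`, and `highFree m R₁` onto `highFree m R₂`. -/
def lowFree (m : ℕ) (R : Finset (ℕ × ℕ)) : Finset (Fin (2 * m)) :=
  {x | (x : ℕ) < m ∧ ∀ a ∈ R, a.2 ≠ x + 1}

def highFree (m : ℕ) (R : Finset (ℕ × ℕ)) : Finset (Fin (2 * m)) :=
  {x | m ≤ (x : ℕ) ∧ ∀ a ∈ R, m + a.1 ≠ x}

theorem IsRookPlacement.card_lowFree {R : Finset (ℕ × ℕ)} (hR : IsRookPlacement (m + 1) R) :
    #(lowFree m R) = m - #R := by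
  have hval : (lowFree m R).map Fin.valEmbedding = range m \ R.image fun a => a.2 - 1 := by
    ext x
    simp only [lowFree, mem_map, mem_filter, mem_univ, true_and, Fin.valEmbedding_apply, mem_sdiff,
      mem_range, mem_image, not_exists, not_and]
    constructor
    · rintro ⟨y, ⟨hy, hfree⟩, rfl⟩
      exact ⟨hy, fun a ha h => hfree a ha (by have := hR.fst_lt_snd ha; omega)⟩
    · rintro ⟨hx, hfree⟩
      exact ⟨⟨x, by omega⟩, ⟨hx, fun a ha h => hfree a ha (by simp only at h; omega)⟩, rfl⟩
  have hinj : Set.InjOn (fun a : ℕ × ℕ => a.2 - 1) R := fun a ha b hb h =>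
    hR.injOn_snd ha hb <| by
      have := hR.fst_lt_snd ha
      have := hR.fst_lt_snd hb
      simp only at h
      omega
  have hsub : R.image (fun a => a.2 - 1) ⊆ range m := by
    intro x hx
    obtain ⟨a, ha, rfl⟩ := mem_image.mp hx
    have := hR.fst_lt_snd ha
    have := hR.snd_lt ha
    exact mem_range.mpr (by omega)
  rw [← card_map, hval, card_sdiff_of_subset hsub, card_range, card_image_of_injOn hinj]

theorem IsRookPlacement.card_highFree {R : Finset (ℕ × ℕ)} (hR : IsRookPlacement (m + 1) R) :
    #(highFree m R) = m - #R := by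
  have hval : (highFree m R).map Fin.valEmbedding =
      (range m \ R.image Prod.fst).map (addLeftEmbedding m) := by
    ext x
    simp only [highFree, mem_map, mem_filter, mem_univ, true_and, Fin.valEmbedding_apply, mem_sdiff,
      mem_range, mem_image, not_exists, not_and, addLeftEmbedding_apply]
    constructor
    · rintro ⟨y, ⟨hy, hR'⟩, rfl⟩
      exact ⟨y - m, ⟨by omega, fun a ha h => hR' a ha (by omega)⟩, by omega⟩
    · rintro ⟨r, ⟨hr, hR'⟩, rfl⟩
      exact ⟨⟨m + r, by omega⟩, ⟨by simp, fun a ha h => hR' a ha (by simp at h; omega)⟩, rfl⟩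
  rw [← card_map, hval, card_map, hR.card_range_sdiff_image_fst]

variable {σ : Perm (Fin (2 * m))} {x : Fin (2 * m)}

theorem mem_lowFree_downRooks : x ∈ lowFree m (downRooks σ) ↔ (x : ℕ) < m ∧ (σ⁻¹ x : ℕ) < m := by
  simp only [lowFree, mem_filter, mem_univ, true_and, mem_downRooks]
  refine and_congr_right fun hx => ⟨fun h => ?_, fun h => ?_⟩
  · by_contra hge
    exact h _ ⟨σ⁻¹ x, by omega, by simpa using hx, rfl⟩ (by simp)
  · rintro _ ⟨j, hj, hσj, rfl⟩ hjx
    obtain rfl : σ j = x := Fin.ext (by simp only at hjx; omega)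
    simp at h
    omega

theorem mem_lowFree_upRooks : x ∈ lowFree m (upRooks σ) ↔ (x : ℕ) < m ∧ (σ x : ℕ) < m := by
  rw [upRooks, mem_lowFree_downRooks, inv_inv]

theorem mem_highFree_downRooks : x ∈ highFree m (downRooks σ) ↔ m ≤ (x : ℕ) ∧ m ≤ (σ x : ℕ) := by
  simp only [highFree, mem_filter, mem_univ, true_and, mem_downRooks]
  refine and_congr_right fun hx => ⟨fun h => ?_, fun h => ?_⟩
  · by_contra hlt
    exact h _ ⟨x, hx, by omega, rfl⟩ (by simp only; omega)
  · rintro _ ⟨j, hj, hσj, rfl⟩ hjx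
    obtain rfl : j = x := Fin.ext (by simp only at hjx; omega)
    omega

theorem mem_highFree_upRooks : x ∈ highFree m (upRooks σ) ↔ m ≤ (x : ℕ) ∧ m ≤ (σ⁻¹ x : ℕ) := by
  rw [upRooks, mem_highFree_downRooks]

end FreeSets

section Assemble

variable {m : ℕ} {R₁ R₂ : Finset (ℕ × ℕ)} {a : ℕ × ℕ} {x : Fin (2 * m)}

-- On a rook placement these sums have at most one term: the rook in column `c`, resp. row `r`.
def rowAt (R : Finset (ℕ × ℕ)) (c : ℕ) : ℕ := ∑ a ∈ R with a.2 = c, a.1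

def colAt (R : Finset (ℕ × ℕ)) (r : ℕ) : ℕ := ∑ a ∈ R with a.1 = r, a.2

theorem rowAt_eq {R : Finset (ℕ × ℕ)} (h : Set.InjOn Prod.snd (R : Set (ℕ × ℕ))) (ha : a ∈ R) :
    rowAt R a.2 = a.1 :=
  sum_eq_single_of_mem a (mem_filter.mpr ⟨ha, rfl⟩) fun _ hb hba =>
    absurd (h (mem_filter.mp hb).1 ha (mem_filter.mp hb).2) hba

theorem colAt_eq {R : Finset (ℕ × ℕ)} (h : Set.InjOn Prod.fst (R : Set (ℕ × ℕ))) (ha : a ∈ R) :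
    colAt R a.1 = a.2 :=
  sum_eq_single_of_mem a (mem_filter.mpr ⟨ha, rfl⟩) fun _ hb hba =>
    absurd (h (mem_filter.mp hb).1 ha (mem_filter.mp hb).2) hba

/-- The permutation with down-crossing rooks `R₁`, up-crossing rooks `R₂`, and acting on the
remaining positions of each half by `e₁` and `e₂`. The reductions `% (2 * m)` only make the value
typecheck: they do nothing when `R₁` and `R₂` are rook placements on `staircase (m + 1)`. -/
def assemble (e₁ : lowFree m R₂ ≃ lowFree m R₁) (e₂ : highFree m R₁ ≃ highFree m R₂)
    (x : Fin (2 * m)) : Fin (2 * m) :=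
  if h : x ∈ lowFree m R₂ then e₁ ⟨x, h⟩
  else if h : x ∈ highFree m R₁ then e₂ ⟨x, h⟩
  else if (x : ℕ) < m then ⟨(m + rowAt R₂ (x + 1)) % (2 * m), Nat.mod_lt _ x.pos⟩
  else ⟨(colAt R₁ (x - m) - 1) % (2 * m), Nat.mod_lt _ x.pos⟩

variable {e₁ : lowFree m R₂ ≃ lowFree m R₁} {e₂ : highFree m R₁ ≃ highFree m R₂}

theorem assemble_of_mem_lowFree (h : x ∈ lowFree m R₂) : assemble e₁ e₂ x = e₁ ⟨x, h⟩ :=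
  dif_pos h

theorem assemble_of_mem_highFree (h : x ∈ highFree m R₁) : assemble e₁ e₂ x = e₂ ⟨x, h⟩ := by
  have hlow : x ∉ lowFree m R₂ := fun h' => by
    simp only [lowFree, highFree, mem_filter, mem_univ, true_and] at h h'
    omega
  rw [assemble, dif_neg hlow, dif_pos h]

theorem val_assemble_of_mem₂ (hR₂ : IsRookPlacement (m + 1) R₂) (ha : a ∈ R₂)
    (hx : a.2 = x + 1) : (assemble e₁ e₂ x : ℕ) = m + a.1 := by
  have := hR₂.fst_lt_snd ha
  have := hR₂.snd_lt ha
  have hlow : x ∉ lowFree m R₂ := by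
    simp only [lowFree, mem_filter, mem_univ, true_and, not_and]
    exact fun _ h => h a ha hx
  have hhigh : x ∉ highFree m R₁ := by
    simp only [highFree, mem_filter, mem_univ, true_and, not_and]
    omega
  rw [assemble, dif_neg hlow, dif_neg hhigh, if_pos (by omega), Fin.val_mk, ← hx,
    rowAt_eq hR₂.injOn_snd ha]
  exact Nat.mod_eq_of_lt (by omega)

theorem val_assemble_of_mem₁ (hR₁ : IsRookPlacement (m + 1) R₁) (ha : a ∈ R₁)
    (hx : (x : ℕ) = m + a.1) : (assemble e₁ e₂ x : ℕ) = a.2 - 1 := by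
  have := hR₁.fst_lt_snd ha
  have := hR₁.snd_lt ha
  have hlow : x ∉ lowFree m R₂ := by
    simp only [lowFree, mem_filter, mem_univ, true_and, not_and]
    omega
  have hhigh : x ∉ highFree m R₁ := by
    simp only [highFree, mem_filter, mem_univ, true_and, not_and]
    exact fun _ h => h a ha hx.symm
  rw [assemble, dif_neg hlow, dif_neg hhigh, if_neg (by omega), Fin.val_mk,
    show (x : ℕ) - m = a.1 by omega, colAt_eq hR₁.injOn_fst ha]
  exact Nat.mod_eq_of_lt (by omega)

variable (hR₁ : IsRookPlacement (m + 1) R₁) (hR₂ : IsRookPlacement (m + 1) R₂)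
include hR₁ hR₂

theorem assemble_surjective : Function.Surjective (assemble e₁ e₂) := by
  intro y
  by_cases hy : (y : ℕ) < m
  · by_cases hfree : y ∈ lowFree m R₁
    · exact ⟨e₁.symm ⟨y, hfree⟩, by simp [assemble_of_mem_lowFree (e₁.symm _).2]⟩
    obtain ⟨a, ha, hay⟩ : ∃ a ∈ R₁, a.2 = y + 1 := by simpa [lowFree, hy] using hfree
    have := hR₁.fst_lt_snd ha
    have := hR₁.snd_lt ha
    exact ⟨⟨m + a.1, by omega⟩, Fin.ext (by rw [val_assemble_of_mem₁ hR₁ ha rfl]; omega)⟩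
  · by_cases hfree : y ∈ highFree m R₂
    · exact ⟨e₂.symm ⟨y, hfree⟩, by simp [assemble_of_mem_highFree (e₂.symm _).2]⟩
    obtain ⟨a, ha, hay⟩ : ∃ a ∈ R₂, m + a.1 = y := by simpa [highFree, not_lt.mp hy] using hfree
    have := hR₂.fst_lt_snd ha
    have := hR₂.snd_lt ha
    exact ⟨⟨a.2 - 1, by omega⟩,
      Fin.ext (by rw [val_assemble_of_mem₂ hR₂ ha (by simp; omega)]; omega)⟩

noncomputable def assemblePerm (e₁ : lowFree m R₂ ≃ lowFree m R₁)
    (e₂ : highFree m R₁ ≃ highFree m R₂) : Perm (Fin (2 * m)) :=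
  Equiv.ofBijective (assemble e₁ e₂)
    (Finite.surjective_iff_bijective.mp (assemble_surjective hR₁ hR₂))

theorem assemblePerm_apply : assemblePerm hR₁ hR₂ e₁ e₂ x = assemble e₁ e₂ x := rfl

theorem downRooks_assemblePerm : downRooks (assemblePerm hR₁ hR₂ e₁ e₂) = R₁ := by
  ext a
  simp only [mem_downRooks, assemblePerm_apply]
  constructor
  · rintro ⟨j, hj, hτj, rfl⟩
    have hfree : j ∉ highFree m R₁ := fun h => by
      have := (mem_filter.mp (e₂ ⟨j, h⟩).2).2.1
      rw [assemble_of_mem_highFree h] at hτj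
      omega
    obtain ⟨b, hb, hbj⟩ : ∃ b ∈ R₁, m + b.1 = j := by simpa [highFree, hj] using hfree
    have := hR₁.fst_lt_snd hb
    rw [val_assemble_of_mem₁ hR₁ hb hbj.symm]
    convert hb using 1
    ext <;> simp only <;> omega
  · intro ha
    have := hR₁.fst_lt_snd ha
    have := hR₁.snd_lt ha
    refine ⟨⟨m + a.1, by omega⟩, by simp, ?_, ?_⟩ <;>
      rw [val_assemble_of_mem₁ hR₁ ha rfl]
    · omega
    · ext <;> simp only <;> omega

theorem upRooks_assemblePerm : upRooks (assemblePerm hR₁ hR₂ e₁ e₂) = R₂ := by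
  ext a
  simp only [mem_upRooks, assemblePerm_apply]
  constructor
  · rintro ⟨i, hi, hτi, rfl⟩
    have hfree : i ∉ lowFree m R₂ := fun h => by
      have := (mem_filter.mp (e₁ ⟨i, h⟩).2).2.1
      rw [assemble_of_mem_lowFree h] at hτi
      omega
    obtain ⟨b, hb, hbi⟩ : ∃ b ∈ R₂, b.2 = i + 1 := by simpa [lowFree, hi] using hfree
    rw [val_assemble_of_mem₂ hR₂ hb hbi]
    convert hb using 1
    ext <;> simp only <;> omega
  · intro ha
    have := hR₂.fst_lt_snd ha
    have := hR₂.snd_lt ha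
    refine ⟨⟨a.2 - 1, by omega⟩, by simp; omega, ?_, ?_⟩ <;>
      rw [val_assemble_of_mem₂ hR₂ ha (by simp; omega)]
    · omega
    · ext <;> simp only <;> omega

theorem assemble_eq_of_restrict {σ : Perm (Fin (2 * m))} (h₁ : downRooks σ = R₁)
    (h₂ : upRooks σ = R₂) (he₁ : ∀ x, (e₁ x : Fin (2 * m)) = σ x)
    (he₂ : ∀ x, (e₂ x : Fin (2 * m)) = σ x) : assemble e₁ e₂ = σ := by
  funext x
  by_cases hlow : x ∈ lowFree m R₂
  · rw [assemble_of_mem_lowFree hlow, he₁]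
  by_cases hhigh : x ∈ highFree m R₁
  · rw [assemble_of_mem_highFree hhigh, he₂]
  subst h₁ h₂
  apply Fin.ext
  by_cases hx : (x : ℕ) < m
  · have hσx : m ≤ (σ x : ℕ) := by
      rw [mem_lowFree_upRooks] at hlow
      omega
    rw [val_assemble_of_mem₂ hR₂ (mem_upRooks.mpr ⟨x, hx, hσx, rfl⟩) rfl]
    omega
  · have hσx : (σ x : ℕ) < m := by
      rw [mem_highFree_downRooks] at hhigh
      omega
    rw [val_assemble_of_mem₁ hR₁ (mem_downRooks.mpr ⟨x, by omega, hσx, rfl⟩) (by simp only; omega)]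
    omega

end Assemble

section Fibers

variable {m : ℕ} {R₁ R₂ : Finset (ℕ × ℕ)} {σ : Perm (Fin (2 * m))} {x : Fin (2 * m)}

theorem mem_lowFree_iff_apply (h₁ : downRooks σ = R₁) (h₂ : upRooks σ = R₂) :
    x ∈ lowFree m R₂ ↔ σ x ∈ lowFree m R₁ := by
  subst h₁ h₂
  rw [mem_lowFree_upRooks, mem_lowFree_downRooks, Perm.coe_inv, symm_apply_apply, and_comm]

theorem mem_highFree_iff_apply (h₁ : downRooks σ = R₁) (h₂ : upRooks σ = R₂) :
    x ∈ highFree m R₁ ↔ σ x ∈ highFree m R₂ := by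
  subst h₁ h₂
  rw [mem_highFree_downRooks, mem_highFree_upRooks, Perm.coe_inv, symm_apply_apply, and_comm]

noncomputable def fiberEquiv (hR₁ : IsRookPlacement (m + 1) R₁) (hR₂ : IsRookPlacement (m + 1) R₂) :
    {σ : Perm (Fin (2 * m)) // downRooks σ = R₁ ∧ upRooks σ = R₂} ≃
      (lowFree m R₂ ≃ lowFree m R₁) × (highFree m R₁ ≃ highFree m R₂) where
  toFun σ :=
    (σ.1.subtypeEquiv fun _ => mem_lowFree_iff_apply σ.2.1 σ.2.2,
      σ.1.subtypeEquiv fun _ => mem_highFree_iff_apply σ.2.1 σ.2.2)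
  invFun e :=
    ⟨assemblePerm hR₁ hR₂ e.1 e.2, downRooks_assemblePerm hR₁ hR₂, upRooks_assemblePerm hR₁ hR₂⟩
  left_inv σ := Subtype.ext <| Equiv.ext <| congrFun <|
    assemble_eq_of_restrict hR₁ hR₂ σ.2.1 σ.2.2 (fun _ => rfl) (fun _ => rfl)
  right_inv _ := Prod.ext (Equiv.ext fun x => Subtype.ext (assemble_of_mem_lowFree x.2))
    (Equiv.ext fun x => Subtype.ext (assemble_of_mem_highFree x.2))

theorem card_filter_downRooks_upRooks {t : ℕ} (hR₁ : R₁ ∈ rookPlacements (m + 1) t)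
    (hR₂ : R₂ ∈ rookPlacements (m + 1) t) :
    #{σ : Perm (Fin (2 * m)) | downRooks σ = R₁ ∧ upRooks σ = R₂} =
      (m - t).factorial * (m - t).factorial := by
  obtain ⟨hRook₁, rfl⟩ := mem_rookPlacements.mp hR₁
  obtain ⟨hRook₂, h₂⟩ := mem_rookPlacements.mp hR₂
  have hlow : Fintype.card (lowFree m R₂) = Fintype.card (lowFree m R₁) := by
    rw [Fintype.card_coe, Fintype.card_coe, hRook₁.card_lowFree, hRook₂.card_lowFree, h₂]
  have hhigh : Fintype.card (highFree m R₁) = Fintype.card (highFree m R₂) := by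
    rw [Fintype.card_coe, Fintype.card_coe, hRook₁.card_highFree, hRook₂.card_highFree, h₂]
  rw [← Fintype.card_subtype, Fintype.card_congr (fiberEquiv hRook₁ hRook₂), Fintype.card_prod,
    Fintype.card_equiv (Fintype.equivOfCardEq hlow),
    Fintype.card_equiv (Fintype.equivOfCardEq hhigh),
    Fintype.card_coe, Fintype.card_coe, hRook₂.card_lowFree, hRook₁.card_highFree, h₂]

theorem filter_isBanded_downRooks_upRooks {t : ℕ} (hR₁ : R₁ ∈ rookPlacements (m + 1) t)
    (hR₂ : R₂ ∈ rookPlacements (m + 1) t) :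
    {σ ∈ (univ.filter fun σ : Perm (Fin (2 * m)) => IsBanded σ ∧ #(downCrossings σ) = t) |
      (downRooks σ, upRooks σ) = (R₁, R₂)} =
      univ.filter fun σ => downRooks σ = R₁ ∧ upRooks σ = R₂ := by
  ext σ
  simp only [mem_filter, mem_univ, true_and, Prod.mk.injEq, and_iff_right_iff_imp]
  rintro ⟨rfl, rfl⟩
  obtain ⟨h₁, rfl⟩ := mem_rookPlacements.mp hR₁
  exact ⟨isBanded_iff_isRookPlacement.mpr ⟨h₁, (mem_rookPlacements.mp hR₂).1⟩,
    (card_downRooks σ).symm⟩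

end Fibers

theorem stmt3_general (m : ℕ) (t : ℕ) (ht : t ≤ m) :
    (Finset.univ.filter (fun σ : Equiv.Perm (Fin (2 * m)) =>
        (∀ i : Fin (2 * m), |((i : ℕ) : ℤ) - ((σ i : ℕ) : ℤ)| ≤ (m : ℤ)) ∧
        (Finset.univ.filter
          (fun j : Fin (2 * m) => m ≤ (j : ℕ) ∧ (σ j : ℕ) < m)).card = t)).card
      = ((m - t).factorial * stirling (m + 1) (m - t + 1)) ^ 2 := by
  set banded : Finset (Perm (Fin (2 * m))) := {σ | IsBanded σ ∧ #(downCrossings σ) = t}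
  change #banded = _
  have hmaps : Set.MapsTo (fun σ => (downRooks σ, upRooks σ)) (banded : Set (Perm (Fin (2 * m))))
      ↑(rookPlacements (m + 1) t ×ˢ rookPlacements (m + 1) t) := fun σ hσ => by
    obtain ⟨hbanded, rfl⟩ := (mem_filter.mp (mem_coe.mp hσ)).2
    exact mem_product.mpr ⟨hbanded.mem_rookPlacements_downRooks, hbanded.mem_rookPlacements_upRooks⟩
  have hfiber : ∀ p ∈ rookPlacements (m + 1) t ×ˢ rookPlacements (m + 1) t,
      #{σ ∈ banded | (downRooks σ, upRooks σ) = p} = (m - t).factorial * (m - t).factorial := by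
    rintro ⟨R₁, R₂⟩ hp
    obtain ⟨hR₁, hR₂⟩ := mem_product.mp hp
    rw [filter_isBanded_downRooks_upRooks hR₁ hR₂, card_filter_downRooks_upRooks hR₁ hR₂]
  rw [card_eq_sum_card_fiberwise hmaps, sum_const_nat hfiber, card_product, card_rookPlacements,
    show m + 1 - t = m - t + 1 by omega]
  ring

theorem stmt3 (m : ℕ) (hm : 2 ≤ m) (t : ℕ) (ht : t ≤ m) :
    (Finset.univ.filter (fun σ : Equiv.Perm (Fin (2 * m)) =>
        (∀ i : Fin (2 * m), |((i : ℕ) : ℤ) - ((σ i : ℕ) : ℤ)| ≤ (m : ℤ)) ∧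
        (Finset.univ.filter
          (fun j : Fin (2 * m) => m ≤ (j : ℕ) ∧ (σ j : ℕ) < m)).card = t)).card
      = ((m - t).factorial * stirling (m + 1) (m - t + 1)) ^ 2 :=
  stmt3_general m t ht
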